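/- Let A be a commutative ring with 2 invertible, B a commutative A-algebra, and C_n = B^{⊗(n+1)}/(∑_{i<j} I_{ij}²) with J̃_{ij} the images of the I_{ij}. On C_n, the composite Φ_n ∘ Ψ_n equals ∏_{j=1}^n (id − M_j), where M_j is the endomorphism of C_n induced by y₀⊗⋯⊗y_j⊗⋯⊗yₙ ↦ (y₀y_j)⊗y₁⊗⋯⊗1⊗⋯⊗yₙ (moving the j-th entry into the 0-th slot and replacing it by 1). Since each M_j factors through the merge map μ_{0j}, the composite Φ_n ∘ Ψ_n restricts to the identity on the ideal ⋂_{j=1}^n J̃_{0j}. -/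

import Mathlib

open scoped TensorProduct
open PiTensorProduct

variable (A B : Type) [CommRing A] [CommRing B] [Algebra A B]

abbrev Bpow (n : ℕ) : Type := ⨂[A] (_ : Fin n), B

noncomputable def rmap {m n : ℕ} (r : Fin m → Fin n) : Bpow A B m →ₐ[A] Bpow A B n :=
  PiTensorProduct.liftAlgHom
    ((MultilinearMap.mkPiAlgebra A (Fin m) (Bpow A B n)).compLinearMap
      (fun k => (PiTensorProduct.singleAlgHom (R := A) (A := fun _ : Fin n => B) (r k)).toLinearMap))
    (by simp [← PiTensorProduct.one_def])
    (by intro x y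
        simp only [MultilinearMap.compLinearMap_apply, MultilinearMap.mkPiAlgebra_apply,
          Pi.mul_apply, AlgHom.toLinearMap_apply, _root_.map_mul, Finset.prod_mul_distrib])

noncomputable def mergeN (n i j : ℕ) (hij : i < j) (hj : j ≤ n) :
    Bpow A B (n+1) →ₐ[A] Bpow A B n :=
  rmap A B (fun k => if h1 : k.val < j then ⟨k.val, by omega⟩
    else if h2 : k.val = j then ⟨i, by omega⟩
    else ⟨k.val - 1, by have := k.isLt; omega⟩)

noncomputable def Iideal (n i j : ℕ) (hij : i < j) (hj : j ≤ n) : Ideal (Bpow A B (n+1)) :=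
  RingHom.ker (mergeN A B n i j hij hj)

noncomputable def Kideal (n : ℕ) : Ideal (Bpow A B (n+1)) :=
  ⨆ (i : ℕ) (j : ℕ) (hij : i < j) (hj : j ≤ n), (Iideal A B n i j hij hj) ^ 2

abbrev Cq (n : ℕ) : Type := Bpow A B (n+1) ⧸ Kideal A B n

noncomputable def Jt (n i j : ℕ) (hij : i < j) (hj : j ≤ n) : Ideal (Cq A B n) :=
  Ideal.map (Ideal.Quotient.mk (Kideal A B n)) (Iideal A B n i j hij hj)

noncomputable def dElt (n i j : ℕ) (hi : i ≤ n) (hj : j ≤ n) (y : B) : Bpow A B (n+1) :=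
  PiTensorProduct.singleAlgHom (R := A) (A := fun _ : Fin (n+1) => B) ⟨j, by omega⟩ y
    - PiTensorProduct.singleAlgHom (R := A) (A := fun _ : Fin (n+1) => B) ⟨i, by omega⟩ y

noncomputable def insN (n j : ℕ) (hj : j ≤ n+1) : Bpow A B (n+1) →ₐ[A] Bpow A B (n+2) :=
  rmap A B (fun k => if h : k.val < j then ⟨k.val, by omega⟩
    else ⟨k.val + 1, by have := k.isLt; omega⟩)

noncomputable def eN (n : ℕ) : Bpow A B (n+1) →ₗ[A] Bpow A B (n+2) :=
  ∑ j : Fin (n+2), ((-1 : ℤ) ^ (j : ℕ)) • (insN A B n j (by omega)).toLinearMap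

noncomputable def smashG (m n N : ℕ) (h : N = m + n) (x : Bpow A B (m+1)) (y : Bpow A B (n+1)) :
    Bpow A B (N+1) :=
  rmap A B (fun k : Fin (m+1) => (⟨k.val, by have := k.isLt; omega⟩ : Fin (N+1))) x *
  rmap A B (fun k : Fin (n+1) => (⟨m + k.val, by have := k.isLt; omega⟩ : Fin (N+1))) y

/-- The wedge `dy₁ ∧ ⋯ ∧ dyₙ`-style elements of the `n`-th exterior power. -/
noncomputable def wedgeD (n : ℕ) (f : Fin n → Ω[B⁄A]) : ⋀[B]^n (Ω[B⁄A]) :=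
  ⟨ExteriorAlgebra.ιMulti B n f, ExteriorAlgebra.ιMulti_range B n (Set.mem_range_self f)⟩

/-- `B`-algebra structure on `C_n` through the 0-th tensor factor. -/
noncomputable instance instAlgebraBCq (n : ℕ) : Algebra B (Cq A B n) :=
  ((Ideal.Quotient.mk (Kideal A B n)).comp
    (PiTensorProduct.singleAlgHom (R := A) (A := fun _ : Fin (n+1) => B) 0).toRingHom).toAlgebra

/-!
On a pure tensor, `y₀ ⊗ ⋯ ⊗ yₙ = y₀ · ∏ⱼ sⱼ` with `sⱼ` the element `yⱼ` placed in slot `j`. The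
algebra map `Mⱼ` sends `sⱼ` to `yⱼ` in slot `0` and fixes `y₀`, every `sₖ` with `k ≠ j` and every
`d^{0k} yₖ`, so applying the maps `id - Mⱼ` in turn replaces each factor `sⱼ` by `d^{0j} yⱼ`; the
result `y₀ ∏ⱼ d^{0j} yⱼ` is `Φₙ (Ψₙ (y₀ ⊗ ⋯ ⊗ yₙ))`. Since `Mⱼ` factors through the merge map
`μ_{0j}`, it kills `J̃_{0j}`, so every `id - Mⱼ` fixes the intersection of these ideals.
-/

lemma list_prod_map_apply_of_intertwines {R M N ι : Type*} [Semiring R]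
    [AddCommMonoid M] [AddCommMonoid N] [Module R M] [Module R N]
    (π : M → N) (F : ι → Module.End R N) (G : ι → Module.End R M)
    (h : ∀ i x, F i (π x) = π (G i x)) (l : List ι) (x : M) :
    (l.map F).prod (π x) = π ((l.map G).prod x) := by
  induction l with
  | nil => rfl
  | cons i l ih => simp only [List.map_cons, List.prod_cons, Module.End.mul_apply, ih, h]

lemma list_prod_map_apply_eq_self {R M ι : Type*} [Semiring R] [AddCommMonoid M] [Module R M]
    (F : ι → Module.End R M) (l : List ι) (x : M) (h : ∀ i ∈ l, F i x = x) :
    (l.map F).prod x = x :=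
  List.prod_induction (fun f : Module.End R M => f x = x)
    (fun f g (hf : f x = x) (hg : g x = x) => by rw [Module.End.mul_apply, hg, hf])
    rfl (by simpa using h)

lemma list_prod_map_id_sub_apply_mul_prod {A R ι : Type*} [CommSemiring A] [CommRing R]
    [Algebra A R] (f : ι → R →ₐ[A] R) (s s' : ι → R) (hf : ∀ i, f i (s i) = s' i)
    (hs : ∀ i j, i ≠ j → f i (s j) = s j) (hs' : ∀ i j, f i (s' j) = s' j)
    (l : List ι) (hl : l.Nodup) (t : R) (ht : ∀ i ∈ l, f i t = t) :
    (l.map fun i => (LinearMap.id - (f i).toLinearMap : Module.End A R)).prod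
        (t * (l.map s).prod)
      = t * (l.map fun i => s i - s' i).prod := by
  induction l generalizing t with
  | nil => simp
  | cons i l ih =>
    obtain ⟨hi, hl⟩ := List.nodup_cons.mp hl
    have hfix : f i (l.map fun j => s j - s' j).prod = (l.map fun j => s j - s' j).prod := by
      rw [map_list_prod, List.map_map]
      refine congrArg List.prod (List.map_congr_left fun j hj => ?_)
      rw [Function.comp_apply, map_sub, hs i j (by rintro rfl; exact hi hj), hs']
    have ih' := ih hl (t * s i) fun j hj => by
      rw [map_mul, ht j (List.mem_cons_of_mem i hj), hs j i (by rintro rfl; exact hi hj)]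
    simp only [List.map_cons, List.prod_cons, Module.End.mul_apply, ← mul_assoc, ih',
      LinearMap.sub_apply, LinearMap.id_apply, AlgHom.toLinearMap_apply, map_mul, hfix, hf,
      ht i List.mem_cons_self]
    ring

lemma rmap_tprod {m n : ℕ} (r : Fin m → Fin n) (y : Fin m → B) :
    rmap A B r (tprod A y) = ∏ k : Fin m,
      PiTensorProduct.singleAlgHom (R := A) (A := fun _ : Fin n => B) (r k) (y k) := by
  unfold rmap
  erw [PiTensorProduct.liftAlgHom_apply, PiTensorProduct.lift.tprod]
  simp

lemma rmap_single {m n : ℕ} (r : Fin m → Fin n) (i : Fin m) (b : B) :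
    rmap A B r (PiTensorProduct.singleAlgHom (R := A) (A := fun _ : Fin m => B) i b)
      = PiTensorProduct.singleAlgHom (R := A) (A := fun _ : Fin n => B) (r i) b := by
  simp only [PiTensorProduct.singleAlgHom_apply]
  rw [rmap_tprod, Finset.prod_eq_single i]
  · simp
  · intro k _ hk
    rw [MonoidHom.mulSingle_apply, Pi.mulSingle_eq_of_ne hk, _root_.map_one]
  · simp

lemma rmap_rmap {m n p : ℕ} (r : Fin n → Fin p) (s : Fin m → Fin n) (x : Bpow A B m) :
    rmap A B r (rmap A B s x) = rmap A B (r ∘ s) x := by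
  suffices h : (rmap A B r).comp (rmap A B s) = rmap A B (r ∘ s) from congrArg (· x) h
  refine PiTensorProduct.algHom_ext fun i => AlgHom.ext fun b => ?_
  simp only [AlgHom.comp_apply, rmap_single, Function.comp]

lemma tprod_eq_single_zero_mul_prod {n : ℕ} (y : Fin (n+1) → B) :
    tprod A y = PiTensorProduct.singleAlgHom (R := A) (A := fun _ : Fin (n+1) => B) 0 (y 0)
      * ∏ j : Fin n, PiTensorProduct.singleAlgHom (R := A) (A := fun _ : Fin (n+1) => B) j.succ
          (y j.succ) := by
  simp only [PiTensorProduct.singleAlgHom_apply, MonoidHom.mulSingle_apply]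
  rw [← Fin.prod_univ_succ (fun k => tprod A (Pi.mulSingle k (y k))), ← PiTensorProduct.tprod_prod,
    Finset.univ_prod_mulSingle]

/-- The lift of the paper's `M_{j+1}` to `B^{⊗(n+1)}`. -/
noncomputable def moveSlotToZero (n : ℕ) (j : Fin n) : Bpow A B (n+1) →ₐ[A] Bpow A B (n+1) :=
  rmap A B (fun k : Fin (n+1) => if k.val = j.val + 1 then 0 else k)

lemma moveSlotToZero_single_succ (n : ℕ) (j : Fin n) (b : B) :
    moveSlotToZero A B n j
        (PiTensorProduct.singleAlgHom (R := A) (A := fun _ : Fin (n+1) => B) j.succ b)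
      = PiTensorProduct.singleAlgHom (R := A) (A := fun _ : Fin (n+1) => B) 0 b := by
  rw [moveSlotToZero, rmap_single, if_pos (show (j.succ : ℕ) = j + 1 from rfl)]

lemma moveSlotToZero_single_of_ne (n : ℕ) (j : Fin n) {k : Fin (n+1)} (hk : k ≠ j.succ) (b : B) :
    moveSlotToZero A B n j
        (PiTensorProduct.singleAlgHom (R := A) (A := fun _ : Fin (n+1) => B) k b)
      = PiTensorProduct.singleAlgHom (R := A) (A := fun _ : Fin (n+1) => B) k b := by
  rw [moveSlotToZero, rmap_single, if_neg (show ¬(k : ℕ) = j + 1 from fun h => hk (Fin.ext h))]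

lemma list_prod_ofFn_id_sub_moveSlotToZero_tprod (n : ℕ) (y : Fin (n+1) → B) :
    (List.ofFn fun j : Fin n =>
        (LinearMap.id - (moveSlotToZero A B n j).toLinearMap : Module.End A (Bpow A B (n+1)))).prod
        (tprod A y)
      = PiTensorProduct.singleAlgHom (R := A) (A := fun _ : Fin (n+1) => B) 0 (y 0)
        * ∏ j : Fin n, dElt A B n 0 (j.val+1) (Nat.zero_le n) j.isLt (y j.succ) := by
  rw [tprod_eq_single_zero_mul_prod, List.ofFn_eq_map, Fin.prod_univ_def, Fin.prod_univ_def]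
  refine list_prod_map_id_sub_apply_mul_prod _ _ _ (fun j => moveSlotToZero_single_succ A B n j _)
    (fun i j hij => moveSlotToZero_single_of_ne A B n i (fun h => hij (Fin.succ_inj.mp h).symm) _)
    (fun i j => moveSlotToZero_single_of_ne A B n i (Fin.succ_ne_zero i).symm _)
    _ (List.nodup_finRange n) _ (fun i _ => moveSlotToZero_single_of_ne A B n i
      (Fin.succ_ne_zero i).symm _)

lemma moveSlotToZero_eq_zero_of_mem_Iideal (n : ℕ) (j : Fin n) {ξ : Bpow A B (n+1)}
    (hξ : ξ ∈ Iideal A B n 0 (j.val+1) (Nat.succ_pos _) j.isLt) :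
    moveSlotToZero A B n j ξ = 0 := by
  have hfactor : moveSlotToZero A B n j ξ
      = rmap A B (fun k : Fin n => if k.val < j.val + 1 then k.castSucc else k.succ)
        (mergeN A B n 0 (j.val+1) (Nat.succ_pos _) j.isLt ξ) := by
    rw [mergeN, rmap_rmap, moveSlotToZero]
    congr 2
    funext k
    apply Fin.ext
    simp only [Function.comp, apply_dite Fin.val, apply_ite Fin.val, Fin.val_zero, Fin.val_succ,
      Fin.val_castSucc]
    split_ifs <;> omega
  rw [hfactor, RingHom.mem_ker.mp hξ, map_zero]

instance Cq.instIsScalarTower (n : ℕ) : IsScalarTower A B (Cq A B n) :=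
  IsScalarTower.of_algebraMap_eq fun r =>
    (((Ideal.Quotient.mkₐ A (Kideal A B n)).comp
      (PiTensorProduct.singleAlgHom (R := A) (A := fun _ : Fin (n+1) => B) 0)).commutes r).symm

lemma Cq.linearMap_ext (n : ℕ) {M : Type*} [AddCommGroup M] [Module A M]
    {f g : Cq A B n →ₗ[A] M}
    (h : ∀ y : Fin (n+1) → B, f (Ideal.Quotient.mk (Kideal A B n) (tprod A y))
      = g (Ideal.Quotient.mk (Kideal A B n) (tprod A y))) :
    f = g := by
  rw [← LinearMap.cancel_right (g := (Ideal.Quotient.mkₐ A (Kideal A B n)).toLinearMap)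
    (Ideal.Quotient.mkₐ_surjective A _)]
  exact PiTensorProduct.ext (MultilinearMap.ext h)

/-- (2 invertible in `A`.)  On `Cₙ`, `Φₙ ∘ Ψₙ = ∏_{j=1}^n (id − Mⱼ)`,
where `Mⱼ` is induced by moving the `j`-th entry into the 0-th slot; consequently
`Φₙ ∘ Ψₙ` restricts to the identity on `⋂_{j=1}^n J̃₀ⱼ`. -/
theorem statement12 (n : ℕ)
    (Ψ : Cq A B (n) →ₗ[A] ⋀[B]^(n) (Ω[B⁄A]))
    (hΨ : ∀ y : Fin (n+1) → B,
      Ψ (Ideal.Quotient.mk (Kideal A B (n)) (PiTensorProduct.tprod A y))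
        = y 0 • wedgeD A B (n) (fun i => KaehlerDifferential.D A B (y i.succ)))
    (Φ : (⋀[B]^n (Ω[B⁄A])) →ₗ[B] Cq A B n)
    (hΦ : ∀ y : Fin n → B,
      Φ (wedgeD A B n (fun i => KaehlerDifferential.D A B (y i)))
        = ∏ i : Fin n, Ideal.Quotient.mk (Kideal A B n)
            (dElt A B n 0 (i.val+1) (by omega) (by have := i.isLt; omega) (y i)))
    (M : Fin n → (Cq A B n →ₗ[A] Cq A B n))
    (hM : ∀ (j : Fin n) (x : Bpow A B (n+1)),
      M j (Ideal.Quotient.mk (Kideal A B n) x)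
        = Ideal.Quotient.mk (Kideal A B n)
            (rmap A B (fun k : Fin (n+1) => if k.val = j.val + 1 then 0 else k) x)) :
    (∀ x : Cq A B n,
      Φ (Ψ x) = (List.ofFn (fun j : Fin n =>
        (LinearMap.id : Cq A B n →ₗ[A] Cq A B n) - M j)).prod x) ∧
    (∀ x ∈ ⨅ j : Fin n, Jt A B n 0 (j.val+1) (by omega) (by have := j.isLt; omega),
      Φ (Ψ x) = x) := by
  set π := Ideal.Quotient.mk (Kideal A B n)
  have hMπ : ∀ j x, (LinearMap.id - M j : Module.End A (Cq A B n)) (π x)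
      = π ((LinearMap.id - (moveSlotToZero A B n j).toLinearMap :
          Module.End A (Bpow A B (n+1))) x) := by
    intro j x
    simp only [LinearMap.sub_apply, LinearMap.id_apply, hM, map_sub]
    rfl
  have hΦΨ : ∀ x,
      Φ (Ψ x) = (List.ofFn fun j => (LinearMap.id - M j : Module.End A (Cq A B n))).prod x := by
    refine LinearMap.congr_fun (Cq.linearMap_ext A B n (f := Φ.restrictScalars A ∘ₗ Ψ) fun y => ?_)
    rw [LinearMap.comp_apply, LinearMap.restrictScalars_apply, hΨ, map_smul, hΦ,
      List.ofFn_eq_map, list_prod_map_apply_of_intertwines π _ _ hMπ, ← List.ofFn_eq_map,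
      list_prod_ofFn_id_sub_moveSlotToZero_tprod, map_mul, map_prod, Algebra.smul_def]
    rfl
  refine ⟨hΦΨ, fun x hx => ?_⟩
  rw [hΦΨ, List.ofFn_eq_map]
  refine list_prod_map_apply_eq_self _ _ _ fun j _ => ?_
  obtain ⟨ξ, hξ, rfl⟩ := (Ideal.mem_map_iff_of_surjective _ Ideal.Quotient.mk_surjective).mp
    ((Submodule.mem_iInf _).mp hx j)
  rw [LinearMap.sub_apply, LinearMap.id_apply, hM, ← moveSlotToZero,
    moveSlotToZero_eq_zero_of_mem_Iideal A B n j hξ, map_zero, sub_zero]
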